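/- Let R be a ring with identity, let t, s ∈ R be units satisfying t·s = s·t, and let M be a left R-module. Define the Alexander biquandle operations on M by x ▷ y = t•x + (s − t)•y and x ◁ y = s•x. Then: (1) for all x ∈ M, x ▷ x = x ◁ x; (2) for each fixed y ∈ M the maps α_y : M → M, α_y(x) = x ◁ y, and β_y : M → M, β_y(x) = x ▷ y, are bijective; and (3) the map S : M × M → M × M defined by S(x, y) = (y ◁ x, x ▷ y) is bijective. Hence M with these operations is a biquandle. -/
import Mathlib


/-- For the Alexander biquandle operations `x ▷ y = t•x + (s-t)•y` and
`x ◁ y = s•x` on a module `M` over a ring `R` with commuting units `t, s`: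
(1) `x ▷ x = x ◁ x` for all `x`; (2) for each `y`, the maps `α_y(x) = x ◁ y` and
`β_y(x) = x ▷ y` are bijective; (3) the map `S(x,y) = (y ◁ x, x ▷ y)` is bijective. -/
theorem alexander_is_biquandle {R : Type*} [Ring R] {M : Type*} [AddCommGroup M]
    [Module R M] (t s : R) (ht : IsUnit t) (hs : IsUnit s) (hcomm : t * s = s * t)
    (utri otri : M → M → M)
    (hutri : ∀ x y : M, utri x y = t • x + (s - t) • y)
    (hotri : ∀ x y : M, otri x y = s • x) :
    (∀ x : M, utri x x = otri x x) ∧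
    (∀ y : M, Function.Bijective (fun x : M => otri x y)) ∧
    (∀ y : M, Function.Bijective (fun x : M => utri x y)) ∧
    Function.Bijective (fun p : M × M => (otri p.2 p.1, utri p.1 p.2)) := by
  obtain ⟨u, hu⟩ := ht
  obtain ⟨v, hv⟩ := hs
  have hut : ∀ x : M, (u : R) • ((u⁻¹ : Rˣ) : R) • x = x := by
    intro x; rw [smul_smul, Units.mul_inv, one_smul]
  have htu : ∀ x : M, ((u⁻¹ : Rˣ) : R) • (u : R) • x = x := by
    intro x; rw [smul_smul, Units.inv_mul, one_smul]
  have hvs : ∀ x : M, (v : R) • ((v⁻¹ : Rˣ) : R) • x = x := by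
    intro x; rw [smul_smul, Units.mul_inv, one_smul]
  have hsv : ∀ x : M, ((v⁻¹ : Rˣ) : R) • (v : R) • x = x := by
    intro x; rw [smul_smul, Units.inv_mul, one_smul]
  subst hu hv
  refine ⟨?_, ?_, ?_, ?_⟩
  · intro x
    rw [hutri, hotri, sub_smul, add_sub_cancel]
  · intro y
    refine Function.bijective_iff_has_inverse.2 ⟨fun x => ((v⁻¹ : Rˣ) : R) • x, ?_, ?_⟩
    · intro x; simp only [hotri]; exact hsv x
    · intro x; simp only [hotri]; exact hvs x
  · intro y
    refine Function.bijective_iff_has_inverse.2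
      ⟨fun x => ((u⁻¹ : Rˣ) : R) • (x - ((v : R) - (u : R)) • y), ?_, ?_⟩
    · intro x; simp only [hutri]; rw [add_sub_cancel_right]; exact htu x
    · intro x; simp only [hutri]; rw [hut, sub_add_cancel]
  · refine Function.bijective_iff_has_inverse.2
      ⟨fun p => (((u⁻¹ : Rˣ) : R) • (p.2 - ((v : R) - (u : R)) • ((v⁻¹ : Rˣ) : R) • p.1),
        ((v⁻¹ : Rˣ) : R) • p.1), ?_, ?_⟩
    · rintro ⟨x, y⟩
      simp only [hutri, hotri]
      refine Prod.ext ?_ ?_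
      · rw [hsv, add_sub_cancel_right]; exact htu x
      · exact hsv y
    · rintro ⟨x, y⟩
      simp only [hutri, hotri]
      refine Prod.ext (hvs x) ?_
      simp only [hvs]
      rw [hut, sub_add_cancel]
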